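/- Suppose every voter has the same nonnegative non-increasing OWA vector λ, so that sco(S) = Σ_{v∈V} Σ_{j=1}^{|A_v ∩ S|} λ_j. Let O = {o_1, …, o_k} ⊆ C be a committee of size k, enumerate {v ∈ V : A_v ∩ O ≠ ∅} = {v_1, …, v_{t'}} with the v_i pairwise distinct, and let χ : V → {1, …, t'} be any coloring with χ(v_i) = i for every i ∈ {1, …, t'}. Let s_1, …, s_k ∈ C be pairwise distinct candidates such that for all i ∈ {1, …, k} and j ∈ {1, …, t'}, if o_i ∈ A_{v_j} then there exists a voter v with s_i ∈ A_v and χ(v) = j. Then S = {s_1, …, s_k} satisfies sco(S) ≥ sco(O). -/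

import Mathlib

/-!
Only the voters `vv j` approve members of `O`, and every `o i ∈ A (vv j)` yields a voter of
color `j` approving `s i`; as `s` is injective, the voters of color `j` together approve at least
`|A (vv j) ∩ O|` members of `S`. Since `n ↦ ∑_{j=1}^n λ_j` is monotone and subadditive (λ is
nonnegative and non-increasing), color class `j` contributes to `sco S` at least what `vv j`
contributes to `sco O`.
-/

open Finset

/-- The score of a committee `S` when all voters share the OWA vector `lam`:
each voter `v` contributes `∑_{j=1}^{|A v ∩ S|} lam j`. -/
def sco {C V : Type*} [Fintype V] [DecidableEq C]
    (A : V → Finset C) (lam : ℕ → ℚ) (S : Finset C) : ℚ :=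
  ∑ v : V, ∑ j ∈ Finset.Icc 1 ((A v ∩ S).card), lam j

section OWA

variable {lam : ℕ → ℚ}

lemma sum_Icc_one_eq_sum_range (lam : ℕ → ℚ) (n : ℕ) :
    ∑ j ∈ Icc 1 n, lam j = ∑ j ∈ range n, lam (j + 1) := by
  rw [← Ico_add_one_right_eq_Icc, sum_Ico_eq_sum_range]
  simp only [add_tsub_cancel_right, add_comm]

lemma sum_Icc_one_mono (hnonneg : ∀ j : ℕ, 1 ≤ j → 0 ≤ lam j) :
    Monotone fun n ↦ ∑ j ∈ Icc 1 n, lam j :=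
  fun _ _ hab ↦ sum_le_sum_of_subset_of_nonneg (Icc_subset_Icc_right hab)
    fun j hj _ ↦ hnonneg j (mem_Icc.mp hj).1

lemma sum_Icc_one_add_le (hmono : ∀ j : ℕ, 1 ≤ j → lam (j + 1) ≤ lam j) (a b : ℕ) :
    ∑ j ∈ Icc 1 (a + b), lam j ≤ ∑ j ∈ Icc 1 a, lam j + ∑ j ∈ Icc 1 b, lam j := by
  have hanti : Antitone fun j ↦ lam (j + 1) :=
    antitone_nat_of_succ_le fun j ↦ hmono (j + 1) (Nat.le_add_left 1 j)
  simp only [sum_Icc_one_eq_sum_range, sum_range_add]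
  gcongr with j
  exact hanti (Nat.le_add_left j a)

lemma sum_Icc_one_le_sum_of_le_sum {ι : Type*} (hnonneg : ∀ j : ℕ, 1 ≤ j → 0 ≤ lam j)
    (hmono : ∀ j : ℕ, 1 ≤ j → lam (j + 1) ≤ lam j) {n : ℕ} {T : Finset ι} {a : ι → ℕ}
    (h : n ≤ ∑ x ∈ T, a x) :
    ∑ j ∈ Icc 1 n, lam j ≤ ∑ x ∈ T, ∑ j ∈ Icc 1 (a x), lam j :=
  (sum_Icc_one_mono hnonneg h).trans <|
    le_sum_of_subadditive (fun n ↦ ∑ j ∈ Icc 1 n, lam j) (by simp) (sum_Icc_one_add_le hmono) T a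

end OWA

lemma card_inter_image_le_sum_card {ι V C : Type*} [Fintype ι] [DecidableEq C]
    (A : V → Finset C) (B : Finset C) (o s : ι → C) (hs : Function.Injective s) (T : Finset V)
    (h : ∀ i, o i ∈ B → ∃ u ∈ T, s i ∈ A u) :
    #(B ∩ univ.image o) ≤ ∑ u ∈ T, #(A u ∩ univ.image s) := by
  classical
  set I := univ.filter fun i ↦ o i ∈ B
  have hO : B ∩ univ.image o ⊆ I.image o := by
    intro c hc
    obtain ⟨hcB, i, -, rfl⟩ := by simpa only [mem_inter, mem_image] using hc
    exact mem_image_of_mem o (by simpa [I] using hcB)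
  have hS : I.image s ⊆ T.biUnion fun u ↦ A u ∩ univ.image s := by
    intro c hc
    obtain ⟨i, hi, rfl⟩ := mem_image.mp hc
    obtain ⟨u, hu, hsu⟩ := h i (by simpa [I] using hi)
    exact mem_biUnion.mpr ⟨u, hu, mem_inter.mpr ⟨hsu, mem_image_of_mem s (mem_univ i)⟩⟩
  calc #(B ∩ univ.image o) ≤ #(I.image o) := card_le_card hO
    _ ≤ #I := card_image_le
    _ = #(I.image s) := (card_image_of_injective I hs).symm
    _ ≤ #(T.biUnion fun u ↦ A u ∩ univ.image s) := card_le_card hS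
    _ ≤ ∑ u ∈ T, #(A u ∩ univ.image s) := card_biUnion_le

lemma sco_le_sum_of_support_subset_range {ι V C : Type*} [Fintype ι] [Fintype V] [DecidableEq C]
    {A : V → Finset C} {lam : ℕ → ℚ} (hnonneg : ∀ j : ℕ, 1 ≤ j → 0 ≤ lam j)
    {S : Finset C} (vv : ι → V) (h : ∀ u, (A u ∩ S).Nonempty → ∃ i, vv i = u) :
    sco A lam S ≤ ∑ i, ∑ j ∈ Icc 1 #(A (vv i) ∩ S), lam j := by
  classical
  have hsupp : sco A lam S = ∑ u ∈ univ.image vv, ∑ j ∈ Icc 1 #(A u ∩ S), lam j := by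
    refine (sum_subset (subset_univ _) fun u _ hu ↦ ?_).symm
    have hempty : A u ∩ S = ∅ :=
      not_nonempty_iff_eq_empty.mp fun hne ↦ hu <| by simpa using h u hne
    simp [hempty]
  rw [hsupp]
  exact sum_image_le_of_nonneg fun u _ ↦ sum_nonneg fun j hj ↦ hnonneg j (mem_Icc.mp hj).1

theorem stmt_15_general {C V : Type*} [Fintype V] [DecidableEq C]
    (A : V → Finset C) (lam : ℕ → ℚ)
    (hnonneg : ∀ j : ℕ, 1 ≤ j → 0 ≤ lam j)
    (hmono : ∀ j : ℕ, 1 ≤ j → lam (j + 1) ≤ lam j)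
    (k t' : ℕ)
    (o : Fin k → C)
    (vv : Fin t' → V)
    (hvimg : ∀ u : V, (A u ∩ Finset.univ.image o).Nonempty ↔ ∃ i : Fin t', vv i = u)
    (χ : V → Fin t')
    (s : Fin k → C) (hs : Function.Injective s)
    (hcond : ∀ (i : Fin k) (j : Fin t'),
      o i ∈ A (vv j) → ∃ u : V, s i ∈ A u ∧ χ u = j) :
    sco A lam (Finset.univ.image o) ≤ sco A lam (Finset.univ.image s) := by
  classical
  calc sco A lam (univ.image o)
      ≤ ∑ j, ∑ n ∈ Icc 1 #(A (vv j) ∩ univ.image o), lam n :=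
        sco_le_sum_of_support_subset_range hnonneg vv fun u hu ↦ (hvimg u).mp hu
    _ ≤ ∑ j, ∑ u with χ u = j, ∑ n ∈ Icc 1 #(A u ∩ univ.image s), lam n := by
        refine sum_le_sum fun j _ ↦ sum_Icc_one_le_sum_of_le_sum hnonneg hmono ?_
        refine card_inter_image_le_sum_card A _ o s hs _ fun i hi ↦ ?_
        obtain ⟨u, hsu, hu⟩ := hcond i j hi
        exact ⟨u, by simpa using hu, hsu⟩
    _ = sco A lam (univ.image s) := sum_fiberwise _ _ _

/-- Correctness of the color-coding step: if `O = {o 1, …, o k}` is a committee,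
`v 1, …, v t'` enumerate the voters with positive intersection with `O`, `χ` is a coloring
with `χ (v i) = i`, and `s 1, …, s k` are pairwise distinct candidates such that whenever
`o i ∈ A (v j)` there is a voter of color `j` approving `s i`, then the committee
`S = {s 1, …, s k}` has score at least that of `O`. -/
theorem stmt_15 {C V : Type*} [Fintype V] [DecidableEq C]
    (A : V → Finset C) (lam : ℕ → ℚ)
    (hnonneg : ∀ j : ℕ, 1 ≤ j → 0 ≤ lam j)
    (hmono : ∀ j : ℕ, 1 ≤ j → lam (j + 1) ≤ lam j)
    (k t' : ℕ)
    (o : Fin k → C) (ho : Function.Injective o)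
    (vv : Fin t' → V) (hvv : Function.Injective vv)
    (hvimg : ∀ u : V, (A u ∩ Finset.univ.image o).Nonempty ↔ ∃ i : Fin t', vv i = u)
    (χ : V → Fin t') (hχ : ∀ i : Fin t', χ (vv i) = i)
    (s : Fin k → C) (hs : Function.Injective s)
    (hcond : ∀ (i : Fin k) (j : Fin t'),
      o i ∈ A (vv j) → ∃ u : V, s i ∈ A u ∧ χ u = j) :
    sco A lam (Finset.univ.image o) ≤ sco A lam (Finset.univ.image s) :=
  stmt_15_general A lam hnonneg hmono k t' o vv hvimg χ s hs hcond
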